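/- For every n ≥ 3, if A, B, C are distinct geometric hyperplanes of the incidence geometry G_n with A ∩ B ⊆ C, then C = A ⊞ B (where A ⊞ B is the complement in P of the symmetric difference of A and B). -/
import Mathlib


/-- The symplectic vector space `V_n = (ZMod 2)^(2n)` of the n-qubit real Pauli group. -/
abbrev V (n : ℕ) : Type := Fin (2 * n) → ZMod 2

/-- The index `2i-1` (0-based: `2i`). -/
def i0 {n : ℕ} (i : Fin n) : Fin (2 * n) := ⟨2 * i.1, by have := i.isLt; omega⟩

/-- The index `2i` (0-based: `2i+1`). -/
def i1 {n : ℕ} (i : Fin n) : Fin (2 * n) := ⟨2 * i.1 + 1, by have := i.isLt; omega⟩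

/-- The symplectic form `⟨x,y⟩ = Σ_{i=1}^n (x_{2i−1} y_{2i} + x_{2i} y_{2i−1})`. -/
def sform {n : ℕ} (x y : V n) : ZMod 2 :=
  ∑ i : Fin n, (x (i0 i) * y (i1 i) + x (i1 i) * y (i0 i))

/-- The point set `P = V_n \ {0}` of the incidence geometry `G_n`. -/
def P (n : ℕ) : Set (V n) := {x | x ≠ 0}

/-- The line set `L = {{a,b,a+b} : a,b ∈ P, a ≠ b, ⟨a,b⟩ = 0}` of `G_n`. -/
def Lines (n : ℕ) : Set (Set (V n)) :=
  {l | ∃ a b : V n, a ∈ P n ∧ b ∈ P n ∧ a ≠ b ∧ sform a b = 0 ∧ l = {a, b, a + b}}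

/-- A subset `H ⊆ P` satisfies condition (H1) if every line meets it in exactly
one point or is contained in it. -/
def IsH1 {n : ℕ} (H : Set (V n)) : Prop :=
  H ⊆ P n ∧ ∀ l ∈ Lines n, (H ∩ l).ncard = 1 ∨ l ⊆ H

/-- A geometric hyperplane: a subset satisfying (H1) which is not the full point set. -/
def IsHyperplane {n : ℕ} (H : Set (V n)) : Prop := IsH1 H ∧ H ≠ P n

/-- `A ⊞ B`: the complement in `P` of the symmetric difference of `A` and `B`. -/
def boxAdd {n : ℕ} (A B : Set (V n)) : Set (V n) := P n \ (symmDiff A B)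

/-- The quadratic form `Q_0(x) = Σ_{i=1}^n x_{2i−1} x_{2i}`. -/
def Q0 {n : ℕ} (x : V n) : ZMod 2 := ∑ i : Fin n, x (i0 i) * x (i1 i)

/-- The quadratic form `Q_p(x) = Q_0(x) + ⟨p,x⟩`. -/
def Qf {n : ℕ} (p x : V n) : ZMod 2 := Q0 x + sform p x

/-- The perp-set hyperplane `C_p = {x ∈ P : ⟨p,x⟩ = 0}`. -/
def Cset {n : ℕ} (p : V n) : Set (V n) := {x ∈ P n | sform p x = 0}

/-- The quadric hyperplane `H_p = {x ∈ P : Q_p(x) = 0}`. -/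
def Hset {n : ℕ} (p : V n) : Set (V n) := {x ∈ P n | Qf p x = 0}

/-- The symplectic transvection `t_p : x ↦ x + ⟨p,x⟩·p`. -/
def tv {n : ℕ} (p : V n) (x : V n) : V n := x + sform p x • p


-- ZMod 2 facts
lemma z2_cases (a : ZMod 2) : a = 0 ∨ a = 1 := by revert a; decide
lemma z2_add_self (a : ZMod 2) : a + a = 0 := by revert a; decide
lemma vadd_self {n : ℕ} (x : V n) : x + x = 0 := by
  funext j; exact z2_add_self (x j)

-- sform basics
lemma sform_comm {n : ℕ} (x y : V n) : sform x y = sform y x := by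
  unfold sform; apply Finset.sum_congr rfl; intro i _; ring

lemma sform_add_left {n : ℕ} (x y z : V n) :
    sform (x + y) z = sform x z + sform y z := by
  unfold sform
  rw [← Finset.sum_add_distrib]
  apply Finset.sum_congr rfl; intro i _
  simp only [Pi.add_apply]; ring

lemma sform_add_right {n : ℕ} (x y z : V n) :
    sform x (y + z) = sform x y + sform x z := by
  rw [sform_comm, sform_add_left, sform_comm y x, sform_comm z x]

lemma sform_self {n : ℕ} (x : V n) : sform x x = 0 := by
  unfold sform
  rw [Finset.sum_eq_zero]
  intro i _
  rw [mul_comm]; exact z2_add_self _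

lemma sform_zero_left {n : ℕ} (y : V n) : sform 0 y = 0 := by
  unfold sform; rw [Finset.sum_eq_zero]; intro i _; simp

lemma sform_zero_right {n : ℕ} (x : V n) : sform x 0 = 0 := by
  rw [sform_comm]; exact sform_zero_left x

lemma Q0_zero {n : ℕ} : Q0 (0 : V n) = 0 := by
  unfold Q0; rw [Finset.sum_eq_zero]; intro i _; simp

lemma Q0_add {n : ℕ} (x y : V n) : Q0 (x + y) = Q0 x + Q0 y + sform x y := by
  unfold Q0 sform
  rw [← Finset.sum_add_distrib, ← Finset.sum_add_distrib]
  apply Finset.sum_congr rfl; intro i _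
  simp only [Pi.add_apply]; ring
def idxE (n : ℕ) : Fin n × Fin 2 ≃ Fin (2 * n) where
  toFun p := ⟨2 * p.1.1 + p.2.1, by have := p.1.isLt; have := p.2.isLt; omega⟩
  invFun j := (⟨j.1 / 2, by have := j.isLt; omega⟩, ⟨j.1 % 2, by omega⟩)
  left_inv p := by
    have := p.2.isLt
    ext <;> simp <;> omega
  right_inv j := by
    have := j.isLt
    ext; simp; omega

lemma idxE_zero {n : ℕ} (i : Fin n) : idxE n (i, 0) = i0 i := by
  unfold idxE i0; ext; simp

lemma idxE_one {n : ℕ} (i : Fin n) : idxE n (i, 1) = i1 i := by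
  unfold idxE i1; ext; simp

lemma pair_sum {n : ℕ} {M : Type*} [AddCommMonoid M] (F : Fin (2 * n) → M) :
    ∑ j, F j = ∑ i : Fin n, (F (i0 i) + F (i1 i)) := by
  rw [← Equiv.sum_comp (idxE n) F, Fintype.sum_prod_type]
  apply Finset.sum_congr rfl; intro i _
  rw [Fin.sum_univ_two, idxE_zero, idxE_one]

lemma i0_ne_i1 {n : ℕ} (i i' : Fin n) : i0 i ≠ i1 i' := by
  unfold i0 i1; intro hh; have := Fin.val_eq_of_eq hh; simp at this; omega

lemma i0_inj {n : ℕ} {i i' : Fin n} (hh : i0 i = i0 i') : i = i' := by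
  unfold i0 at hh; have := Fin.val_eq_of_eq hh; simp at this; exact Fin.ext this

lemma i1_inj {n : ℕ} {i i' : Fin n} (hh : i1 i = i1 i') : i = i' := by
  unfold i1 at hh; have := Fin.val_eq_of_eq hh; simp at this; exact Fin.ext this

lemma idx_decomp {n : ℕ} (j : Fin (2 * n)) : ∃ i : Fin n, j = i0 i ∨ j = i1 i := by
  refine ⟨⟨j.1 / 2, by have := j.isLt; omega⟩, ?_⟩
  have := j.isLt
  rcases Nat.even_or_odd j.1 with ⟨k, hk⟩ | ⟨k, hk⟩
  · left; unfold i0; ext; simp; omega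
  · right; unfold i1; ext; simp; omega

-- evaluation of sform against basis vectors
lemma single_i0 {n : ℕ} (i : Fin n) (c : ZMod 2) :
    (Pi.single (i0 i) c : V n) (i0 i) = c := Pi.single_eq_same _ _

lemma sform_single_i1 {n : ℕ} (p : V n) (i : Fin n) :
    sform p (Pi.single (i1 i) 1) = p (i0 i) := by
  unfold sform
  rw [Finset.sum_eq_single i]
  · rw [Pi.single_eq_same, Pi.single_eq_of_ne (i0_ne_i1 i i)]
    ring
  · intro i' _ hne
    rw [Pi.single_eq_of_ne (fun hh => hne (i1_inj hh)),
        Pi.single_eq_of_ne (i0_ne_i1 i' i)]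
    ring
  · intro hh; exact absurd (Finset.mem_univ i) hh

lemma sform_single_i0 {n : ℕ} (p : V n) (i : Fin n) :
    sform p (Pi.single (i0 i) 1) = p (i1 i) := by
  unfold sform
  rw [Finset.sum_eq_single i]
  · rw [Pi.single_eq_same, Pi.single_eq_of_ne (Ne.symm (i0_ne_i1 i i))]
    ring
  · intro i' _ hne
    rw [Pi.single_eq_of_ne (fun hh => hne (i0_inj hh)),
        Pi.single_eq_of_ne (Ne.symm (i0_ne_i1 i i'))]
    ring
  · intro hh; exact absurd (Finset.mem_univ i) hh

/-- E1a: for nonzero p there is x with ⟨p,x⟩ = 1 -/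
lemma exists_sform_one {n : ℕ} {p : V n} (hp : p ≠ 0) : ∃ x, sform p x = 1 := by
  have : ∃ j, p j ≠ 0 := by
    by_contra hcon
    push_neg at hcon
    exact hp (funext fun j => hcon j)
  obtain ⟨j, hj⟩ := this
  have hj1 : p j = 1 := by rcases z2_cases (p j) with h | h; exact absurd h hj; exact h
  obtain ⟨i, hi | hi⟩ := idx_decomp j
  · exact ⟨Pi.single (i1 i) 1, by rw [sform_single_i1, ← hi, hj1]⟩
  · exact ⟨Pi.single (i0 i) 1, by rw [sform_single_i0, ← hi, hj1]⟩

/-- E1b -/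
lemma exists_sform_one_one {n : ℕ} {p q : V n} (hp : p ≠ 0) (hq : q ≠ 0) :
    ∃ x, sform p x = 1 ∧ sform q x = 1 := by
  obtain ⟨x1, hx1⟩ := exists_sform_one hp
  obtain ⟨x2, hx2⟩ := exists_sform_one hq
  rcases z2_cases (sform q x1) with h1 | h1
  · rcases z2_cases (sform p x2) with h2 | h2
    · refine ⟨x1 + x2, ?_, ?_⟩ <;> rw [sform_add_right]
      · rw [hx1, h2]; decide
      · rw [h1, hx2]; decide
    · exact ⟨x2, h2, hx2⟩
  · exact ⟨x1, hx1, h1⟩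


open Classical in
/-- indicator of the complement of H -/
noncomputable def fH {n : ℕ} (H : Set (V n)) (x : V n) : ZMod 2 :=
  if x = 0 ∨ x ∈ H then 0 else 1

lemma fH_zero {n : ℕ} (H : Set (V n)) : fH H 0 = 0 := by simp [fH]

lemma fH_of_mem {n : ℕ} {H : Set (V n)} {x : V n} (hx : x ∈ H) : fH H x = 0 := by
  simp [fH, hx]

lemma fH_of_not_mem {n : ℕ} {H : Set (V n)} {x : V n} (hx0 : x ≠ 0) (hx : x ∉ H) :
    fH H x = 1 := by
  simp [fH, hx0, hx]

lemma mem_iff_fH {n : ℕ} {H : Set (V n)} (hH : H ⊆ P n) (x : V n) :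
    x ∈ H ↔ (x ≠ 0 ∧ fH H x = 0) := by
  constructor
  · intro hx
    exact ⟨hH hx, fH_of_mem hx⟩
  · rintro ⟨hx0, hfx⟩
    by_contra hx
    rw [fH_of_not_mem hx0 hx] at hfx
    exact one_ne_zero hfx

/-- Wf property -/
def Wf {n : ℕ} (f : V n → ZMod 2) : Prop :=
  f 0 = 0 ∧ ∀ x y : V n, sform x y = 0 → f (x + y) = f x + f y

lemma hyperplane_Wf {n : ℕ} {H : Set (V n)} (hH : IsH1 H) : Wf (fH H) := by
  refine ⟨fH_zero H, ?_⟩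
  intro x y hxy
  by_cases hx0 : x = 0
  · subst hx0; rw [zero_add, fH_zero, zero_add]
  by_cases hy0 : y = 0
  · subst hy0; rw [add_zero, fH_zero, add_zero]
  by_cases hxy0 : x = y
  · subst hxy0
    rw [vadd_self, fH_zero, z2_add_self]
  -- the line {x, y, x+y}
  have hline : ({x, y, x + y} : Set (V n)) ∈ Lines n :=
    ⟨x, y, hx0, hy0, hxy0, hxy, rfl⟩
  have hs0 : x + y ≠ 0 := by
    intro hc
    apply hxy0
    have : x + y + y = y := by rw [hc, zero_add]
    rw [add_assoc, vadd_self, add_zero] at this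
    exact this
  have hsx : x + y ≠ x := by
    intro hc; apply hy0
    have : x + (x + y) = x + x := by rw [hc]
    rw [← add_assoc, vadd_self, zero_add] at this
    exact this
  have hsy : x + y ≠ y := by
    intro hc; apply hx0
    have : x + y + y = y + y := by rw [hc]
    rw [add_assoc, vadd_self, add_zero] at this
    exact this
  rcases hH.2 _ hline with hcard | hsub
  · -- exactly one point of the line in H
    obtain ⟨z, hz⟩ := Set.ncard_eq_one.mp hcard
    have hzmem : z ∈ H ∩ {x, y, x + y} := by rw [hz]; exact rfl
    have hzH : z ∈ H := hzmem.1
    have hzc : z = x ∨ z = y ∨ z = x + y := by simpa using hzmem.2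
    have huniq : ∀ w : V n, w ∈ H → w ∈ ({x, y, x + y} : Set (V n)) → w = z := by
      intro w hw hw'
      have hww : w ∈ H ∩ {x, y, x + y} := ⟨hw, hw'⟩
      rw [hz] at hww; simpa using hww
    rcases hzc with hc | hc | hc
    · have hxH : x ∈ H := by rw [← hc]; exact hzH
      have hyH : y ∉ H := fun hm => hxy0 (((huniq y hm (by simp)).trans hc).symm)
      have hsH : x + y ∉ H := fun hm => hsx ((huniq _ hm (by simp)).trans hc)
      rw [fH_of_mem hxH, fH_of_not_mem hy0 hyH, fH_of_not_mem hs0 hsH]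
      decide
    · have hyH : y ∈ H := by rw [← hc]; exact hzH
      have hxH : x ∉ H := fun hm => hxy0 ((huniq x hm (by simp)).trans hc)
      have hsH : x + y ∉ H := fun hm => hsy ((huniq _ hm (by simp)).trans hc)
      rw [fH_of_mem hyH, fH_of_not_mem hx0 hxH, fH_of_not_mem hs0 hsH]
      decide
    · have hsH : x + y ∈ H := by rw [← hc]; exact hzH
      have hxH : x ∉ H := fun hm => hsx (((huniq x hm (by simp)).trans hc).symm)
      have hyH : y ∉ H := fun hm => hsy (((huniq y hm (by simp)).trans hc).symm)
      rw [fH_of_mem hsH, fH_of_not_mem hx0 hxH, fH_of_not_mem hy0 hyH]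
      decide
  · -- line contained in H
    have h1 : x ∈ H := hsub (by simp)
    have h2 : y ∈ H := hsub (by simp)
    have h3 : x + y ∈ H := hsub (by simp)
    rw [fH_of_mem h1, fH_of_mem h2, fH_of_mem h3, add_zero]

-- δ f a b
def dlt {n : ℕ} (f : V n → ZMod 2) (a b : V n) : ZMod 2 := f (a + b) + f a + f b

lemma dlt_comm {n : ℕ} (f : V n → ZMod 2) (a b : V n) : dlt f a b = dlt f b a := by
  unfold dlt; rw [add_comm a b]; ring

lemma dlt_shift {n : ℕ} (f : V n → ZMod 2) (a b : V n) : dlt f a (a + b) = dlt f a b := by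
  unfold dlt
  have h1 : a + (a + b) = b := by rw [← add_assoc, vadd_self, zero_add]
  rw [h1]
  generalize f b = u; generalize f a = v; generalize f (a + b) = w
  revert u v w; decide

lemma dlt_move {n : ℕ} {f : V n → ZMod 2} (hf : Wf f) {a b b'' : V n}
    (hab : sform a b = 1) (h1 : sform a b'' = 1) (h2 : sform b b'' = 0) :
    dlt f a b = dlt f a b'' := by
  -- c := b + b'', c ⊥ b and c ⊥ (a+b), b'' = b + c
  set c := b + b'' with hc
  have hcb : sform b c = 0 := by
    rw [hc, sform_add_right, sform_self, zero_add]; exact h2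
  have hcab : sform (a + b) c = 0 := by
    rw [sform_add_left, hcb, add_zero, hc, sform_add_right, h1, hab]
    decide
  have hb'' : b'' = b + c := by rw [hc, ← add_assoc, vadd_self, zero_add]
  have e1 : f (a + b'') = f (a + b) + f c := by
    have : a + b'' = (a + b) + c := by rw [hb'', add_assoc]
    rw [this]; exact hf.2 _ _ hcab
  have e2 : f b'' = f b + f c := by rw [hb'']; exact hf.2 _ _ hcb
  unfold dlt
  rw [e1, e2]
  generalize f (a + b) = u; generalize f c = v; generalize f a = w; generalize f b = t
  revert u v w t; decide

lemma dlt_move' {n : ℕ} {f : V n → ZMod 2} (hf : Wf f) {a b b' : V n}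
    (hab : sform a b = 1) (hab' : sform a b' = 1) :
    dlt f a b = dlt f a b' := by
  rcases z2_cases (sform b b') with h | h
  · exact dlt_move hf hab hab' h
  · have h1 : sform a (a + b') = 1 := by
      rw [sform_add_right, sform_self, zero_add]; exact hab'
    have h2 : sform b (a + b') = 0 := by
      rw [sform_add_right, sform_comm b a, hab, h]; decide
    rw [dlt_move hf hab h1 h2, dlt_shift]

lemma sform_ne_zero_left {n : ℕ} {a b : V n} (h : sform a b = 1) : a ≠ 0 := by
  intro hc; rw [hc, sform_zero_left] at h; exact absurd h (by decide)

lemma dlt_const {n : ℕ} {f : V n → ZMod 2} (hf : Wf f) {a b a' b' : V n}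
    (h1 : sform a b = 1) (h2 : sform a' b' = 1) :
    dlt f a b = dlt f a' b' := by
  have ha : a ≠ 0 := sform_ne_zero_left h1
  have ha' : a' ≠ 0 := sform_ne_zero_left h2
  obtain ⟨c, hc1, hc2⟩ := exists_sform_one_one ha ha'
  calc dlt f a b = dlt f a c := dlt_move' hf h1 hc1
    _ = dlt f c a := dlt_comm f a c
    _ = dlt f c a' := dlt_move' hf (by rwa [sform_comm]) (by rwa [sform_comm])
    _ = dlt f a' c := dlt_comm f c a'
    _ = dlt f a' b' := dlt_move' hf hc2 h2

lemma z2_solve1 : ∀ A B C E : ZMod 2, A + B + C = E → A = B + C + E := by decide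
lemma z2_solve2 : ∀ G F Q : ZMod 2, G = F + Q → F = Q + G := by decide

def pr {n : ℕ} (j : Fin (2 * n)) : Fin (2 * n) :=
  ⟨2 * (j.1 / 2) + (1 - j.1 % 2), by have := j.isLt; omega⟩

lemma pr_i0 {n : ℕ} (i : Fin n) : pr (i0 i) = i1 i := by
  apply Fin.ext; simp [pr, i0, i1]; try omega

lemma pr_i1 {n : ℕ} (i : Fin n) : pr (i1 i) = i0 i := by
  apply Fin.ext; simp [pr, i0, i1]; try omega

lemma Wf_classify {n : ℕ} (hn : 1 ≤ n) {f : V n → ZMod 2} (hf : Wf f) :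
    ∃ ε : ZMod 2, ∃ p : V n, ∀ x, f x = ε * Q0 x + sform p x := by
  have hz : 0 < n := hn
  set z : Fin n := ⟨0, hz⟩ with hzdef
  set a0 : V n := Pi.single (i0 z) 1 with ha0
  set b0 : V n := Pi.single (i1 z) 1 with hb0
  have hyp : sform a0 b0 = 1 := by
    rw [hb0, sform_single_i1, ha0, Pi.single_eq_same]
  set ε := dlt f a0 b0 with hε
  set g : V n → ZMod 2 := fun x => f x + ε * Q0 x with hg
  have hgadd : ∀ x y, g (x + y) = g x + g y := by
    intro x y
    rcases z2_cases (sform x y) with hxy | hxy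
    · have h1 : f (x + y) = f x + f y := hf.2 x y hxy
      have h2 : Q0 (x + y) = Q0 x + Q0 y := by
        rw [Q0_add, hxy, add_zero]
      simp only [hg]; rw [h1, h2]; ring
    · have hd : f (x + y) + f x + f y = ε := dlt_const hf hxy hyp
      have h1 : f (x + y) = f x + f y + ε := z2_solve1 _ _ _ _ hd
      have h2 : Q0 (x + y) = Q0 x + Q0 y + 1 := by rw [Q0_add, hxy]
      simp only [hg]; rw [h1, h2]
      generalize f x = A; generalize f y = B
      generalize Q0 x = C; generalize Q0 y = D; generalize ε = E
      revert A B C D E; decide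
  have hg0 : g 0 = 0 := by
    simp only [hg]; rw [hf.1, Q0_zero, mul_zero, add_zero]
  let G : V n →+ ZMod 2 := AddMonoidHom.mk' g hgadd
  have claimA : ∀ x : V n, g x = ∑ j, x j * g (Pi.single j 1) := by
    intro x
    have hx : x = ∑ j, Pi.single j (x j) := (Finset.univ_sum_single x).symm
    calc g x = G x := rfl
      _ = G (∑ j, Pi.single j (x j)) := by rw [← hx]
      _ = ∑ j, G (Pi.single j (x j)) := map_sum G _ _
      _ = ∑ j, x j * g (Pi.single j 1) := by
          apply Finset.sum_congr rfl; intro j _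
          rcases z2_cases (x j) with hh | hh
          · rw [hh, zero_mul, Pi.single_zero]; exact map_zero G
          · rw [hh, one_mul]; rfl
  refine ⟨ε, fun j => g (Pi.single (pr j) 1), fun x => ?_⟩
  have claimB : sform (fun j => g (Pi.single (pr j) 1)) x
      = ∑ j, x j * g (Pi.single j 1) := by
    rw [pair_sum (fun j => x j * g (Pi.single j 1))]
    unfold sform
    apply Finset.sum_congr rfl; intro i _
    simp only [pr_i0, pr_i1]
    ring
  rw [claimB, ← claimA]
  exact z2_solve2 _ _ _ (congrFun hg x)

-- character
def chi (a : ZMod 2) : ℤ := if a = 0 then 1 else -1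

lemma chi_zero : chi 0 = 1 := rfl
lemma chi_add : ∀ a b : ZMod 2, chi (a + b) = chi a * chi b := by decide
lemma chi_cases : ∀ a : ZMod 2, chi a = 1 ∨ chi a = -1 := by decide
lemma chi_abs : ∀ a : ZMod 2, |chi a| = 1 := by decide

lemma chi_sum {ι : Type*} (s : Finset ι) (f : ι → ZMod 2) :
    chi (∑ i ∈ s, f i) = ∏ i ∈ s, chi (f i) := by
  classical
  induction s using Finset.cons_induction with
  | empty => simp [chi_zero]
  | cons a s ha ih => rw [Finset.sum_cons, Finset.prod_cons, chi_add, ih]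

-- pairing bijection between V n and (Fin n → ZMod 2 × ZMod 2)
def Fx {n : ℕ} (x : V n) : Fin n → ZMod 2 × ZMod 2 := fun i => (x (i0 i), x (i1 i))

def Fy {n : ℕ} (y : Fin n → ZMod 2 × ZMod 2) : V n := fun j =>
  if j.1 % 2 = 0 then (y ⟨j.1 / 2, by have := j.isLt; try omega⟩).1
  else (y ⟨j.1 / 2, by have := j.isLt; try omega⟩).2

lemma Fy_Fx {n : ℕ} (x : V n) : Fy (Fx x) = x := by
  funext j
  obtain ⟨i, hi | hi⟩ := idx_decomp j <;> subst hi
  · have h2 : (i0 i).1 % 2 = 0 := by simp [i0]; try omega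
    rw [Fy, if_pos h2]
    show (Fx x _).1 = _
    have he : (⟨(i0 i).1 / 2, by have := (i0 i).isLt; try omega⟩ : Fin n) = i := by
      apply Fin.ext; simp [i0]
    rw [he]; rfl
  · have h2 : ¬ ((i1 i).1 % 2 = 0) := by simp [i1]; try omega
    rw [Fy, if_neg h2]
    show (Fx x _).2 = _
    have he : (⟨(i1 i).1 / 2, by have := (i1 i).isLt; try omega⟩ : Fin n) = i := by
      apply Fin.ext; simp [i1]; try omega
    rw [he]; rfl

lemma Fx_Fy {n : ℕ} (y : Fin n → ZMod 2 × ZMod 2) : Fx (Fy y) = y := by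
  funext i
  have h0 : (i0 i).1 % 2 = 0 := by simp [i0]; try omega
  have h1 : ¬ ((i1 i).1 % 2 = 0) := by simp [i1]; try omega
  have he0 : (⟨(i0 i).1 / 2, by have := (i0 i).isLt; try omega⟩ : Fin n) = i := by
    apply Fin.ext; simp [i0]
  have he1 : (⟨(i1 i).1 / 2, by have := (i1 i).isLt; try omega⟩ : Fin n) = i := by
    apply Fin.ext; simp [i1]; try omega
  apply Prod.ext
  · show (Fy y (i0 i)) = (y i).1
    rw [Fy, if_pos h0, he0]
  · show (Fy y (i1 i)) = (y i).2
    rw [Fy, if_neg h1, he1]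

lemma Fx_bij {n : ℕ} : Function.Bijective (Fx (n := n)) :=
  Function.bijective_iff_has_inverse.mpr ⟨Fy, Fy_Fx, Fx_Fy⟩

lemma sum_prod_pairs {n : ℕ} (g : Fin n → ZMod 2 → ZMod 2 → ℤ) :
    ∑ x : V n, ∏ i, g i (x (i0 i)) (x (i1 i))
      = ∏ i, ∑ z : ZMod 2 × ZMod 2, g i z.1 z.2 := by
  rw [Fintype.prod_sum]
  exact Fintype.sum_bijective Fx Fx_bij _ _ (fun x => rfl)

def Ff {n : ℕ} (w : ZMod 2 × V n) (x : V n) : ZMod 2 := w.1 * Q0 x + sform w.2 x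

noncomputable def Sc {n : ℕ} (w : ZMod 2 × V n) : ℤ := ∑ x : V n, chi (Ff w x)

lemma Ff_add {n : ℕ} (w w' : ZMod 2 × V n) (x : V n) :
    Ff (w + w') x = Ff w x + Ff w' x := by
  unfold Ff
  rw [Prod.fst_add, Prod.snd_add, sform_add_left]
  ring

lemma Ff_zero_w {n : ℕ} (x : V n) : Ff (0 : ZMod 2 × V n) x = 0 := by
  unfold Ff
  rw [Prod.fst_zero, Prod.snd_zero, sform_zero_left, zero_mul, add_zero]

lemma Ff_zero_x {n : ℕ} (w : ZMod 2 × V n) : Ff w 0 = 0 := by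
  unfold Ff
  rw [Q0_zero, sform_zero_right, mul_zero, add_zero]

lemma Ff_pairs {n : ℕ} (w : ZMod 2 × V n) (x : V n) :
    Ff w x = ∑ i : Fin n,
      (w.1 * (x (i0 i) * x (i1 i)) + (w.2 (i0 i) * x (i1 i) + w.2 (i1 i) * x (i0 i))) := by
  unfold Ff Q0 sform
  rw [Finset.mul_sum, ← Finset.sum_add_distrib]

lemma Sc_zero {n : ℕ} : Sc (0 : ZMod 2 × V n) = 2 ^ (2 * n) := by
  unfold Sc
  rw [Finset.sum_congr rfl (fun x _ => by rw [Ff_zero_w x, chi_zero])]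
  rw [Finset.sum_const, Finset.card_univ]
  simp [Fintype.card_fun]

lemma pair_val_quad : ∀ α β : ZMod 2,
    (∑ z : ZMod 2 × ZMod 2, chi (1 * (z.1 * z.2) + (α * z.2 + β * z.1)))
      = chi (α * β) * 2 := by decide

lemma pair_val_lin : ∀ α β : ZMod 2,
    (∑ z : ZMod 2 × ZMod 2, chi (0 * (z.1 * z.2) + (α * z.2 + β * z.1)))
      = if α = 0 ∧ β = 0 then 4 else 0 := by decide

lemma Sc_prod {n : ℕ} (w : ZMod 2 × V n) :
    Sc w = ∏ i : Fin n, ∑ z : ZMod 2 × ZMod 2,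
      chi (w.1 * (z.1 * z.2) + (w.2 (i0 i) * z.2 + w.2 (i1 i) * z.1)) := by
  unfold Sc
  rw [Finset.sum_congr rfl (fun x _ => by rw [Ff_pairs, chi_sum])]
  exact sum_prod_pairs (fun i u v => chi (w.1 * (u * v) + (w.2 (i0 i) * v + w.2 (i1 i) * u)))

lemma Sc_bound {n : ℕ} {w : ZMod 2 × V n} (hw : w ≠ 0) : |Sc w| ≤ 2 ^ n := by
  rcases z2_cases w.1 with h1 | h1
  · -- linear case: w.2 ≠ 0, Sc w = 0
    have h2 : w.2 ≠ 0 := by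
      intro hc; exact hw (Prod.ext h1 hc)
    have : ∃ j, w.2 j ≠ 0 := by
      by_contra hcon; push_neg at hcon
      exact h2 (funext fun j => hcon j)
    obtain ⟨j, hj⟩ := this
    obtain ⟨i, hi⟩ := idx_decomp j
    have hfac : (∑ z : ZMod 2 × ZMod 2,
        chi (w.1 * (z.1 * z.2) + (w.2 (i0 i) * z.2 + w.2 (i1 i) * z.1))) = 0 := by
      rw [Finset.sum_congr rfl (fun z _ => by rw [h1])]
      rw [pair_val_lin, if_neg]
      rintro ⟨ha, hb⟩
      rcases hi with hi | hi <;> rw [hi] at hj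
      · exact hj ha
      · exact hj hb
    rw [Sc_prod, Finset.prod_eq_zero (Finset.mem_univ i) hfac]
    positivity
  · -- quadratic case: |Sc w| = 2^n
    rw [Sc_prod]
    rw [Finset.prod_congr rfl (fun i _ => by
      rw [Finset.sum_congr rfl (fun z _ => by rw [h1]), pair_val_quad])]
    rw [Finset.prod_mul_distrib, Finset.prod_const, Finset.card_univ, Fintype.card_fin]
    rw [abs_mul, abs_pow, Finset.abs_prod]
    rw [Finset.prod_congr rfl (fun i _ => chi_abs _), Finset.prod_const, one_pow]
    simp

lemma pw_add_self {n : ℕ} (w : ZMod 2 × V n) : w + w = 0 := by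
  apply Prod.ext
  · exact z2_add_self w.1
  · exact vadd_self w.2

lemma pw_ne_zero {n : ℕ} {w w' : ZMod 2 × V n} (h : w ≠ w') : w + w' ≠ 0 := by
  intro hc
  apply h
  have : w + w' + w' = w' := by rw [hc, zero_add]
  rwa [add_assoc, pw_add_self, add_zero] at this

lemma exists_point {n : ℕ} (hn : 3 ≤ n) (w1 w2 w3 : ZMod 2 × V n)
    (h1 : w1 ≠ 0) (h2 : w2 ≠ 0) (h3 : w3 ≠ 0) (h12 : w1 ≠ w2)
    (h13 : w3 ≠ w1) (h23 : w3 ≠ w2) (h123 : w3 ≠ w1 + w2) :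
    ∃ x : V n, Ff w1 x = 0 ∧ Ff w2 x = 0 ∧ Ff w3 x = 1 := by
  have hterm : ∀ x : V n,
      (1 + chi (Ff w1 x)) * (1 + chi (Ff w2 x)) * (1 - chi (Ff w3 x)) =
      chi (Ff 0 x) + chi (Ff w1 x) + chi (Ff w2 x) + chi (Ff (w1 + w2) x)
      - (chi (Ff w3 x) + chi (Ff (w1 + w3) x) + chi (Ff (w2 + w3) x)
          + chi (Ff (w1 + w2 + w3) x)) := by
    intro x
    have e0 : chi (Ff 0 x) = 1 := by rw [Ff_zero_w, chi_zero]
    have e12 : chi (Ff (w1 + w2) x) = chi (Ff w1 x) * chi (Ff w2 x) := by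
      rw [Ff_add, chi_add]
    have e13 : chi (Ff (w1 + w3) x) = chi (Ff w1 x) * chi (Ff w3 x) := by
      rw [Ff_add, chi_add]
    have e23 : chi (Ff (w2 + w3) x) = chi (Ff w2 x) * chi (Ff w3 x) := by
      rw [Ff_add, chi_add]
    have e123 : chi (Ff (w1 + w2 + w3) x)
        = chi (Ff w1 x) * chi (Ff w2 x) * chi (Ff w3 x) := by
      rw [Ff_add, Ff_add, chi_add, chi_add]
    rw [e0, e12, e13, e23, e123]; ring
  set T : ℤ := ∑ x : V n, (1 + chi (Ff w1 x)) * (1 + chi (Ff w2 x)) * (1 - chi (Ff w3 x))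
    with hT
  have hTeq : T = Sc (0 : ZMod 2 × V n) + Sc w1 + Sc w2 + Sc (w1 + w2)
      - (Sc w3 + Sc (w1 + w3) + Sc (w2 + w3) + Sc (w1 + w2 + w3)) := by
    rw [hT, Finset.sum_congr rfl (fun x _ => hterm x)]
    unfold Sc
    rw [Finset.sum_sub_distrib, Finset.sum_add_distrib, Finset.sum_add_distrib,
        Finset.sum_add_distrib, Finset.sum_add_distrib, Finset.sum_add_distrib,
        Finset.sum_add_distrib]
  -- lower bound
  have hb1 := Sc_bound h1
  have hb2 := Sc_bound h2
  have hb3 := Sc_bound h3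
  have hb12 := Sc_bound (pw_ne_zero h12)
  have hb13 : |Sc (w1 + w3)| ≤ 2 ^ n := by
    have : w1 + w3 ≠ 0 := by rw [add_comm]; exact pw_ne_zero h13
    exact Sc_bound this
  have hb23 : |Sc (w2 + w3)| ≤ 2 ^ n := by
    have : w2 + w3 ≠ 0 := by rw [add_comm]; exact pw_ne_zero h23
    exact Sc_bound this
  have hb123 : |Sc (w1 + w2 + w3)| ≤ 2 ^ n := by
    have : w1 + w2 + w3 ≠ 0 := by rw [add_comm]; exact pw_ne_zero h123
    exact Sc_bound this
  have hpow : (2 : ℤ) ^ (2 * n) = 2 ^ n * 2 ^ n := by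
    rw [two_mul, pow_add]
  have hpn : (8 : ℤ) ≤ 2 ^ n := by
    calc (8 : ℤ) = 2 ^ 3 := by norm_num
      _ ≤ 2 ^ n := pow_le_pow_right₀ (by norm_num) hn
  have hTpos : 0 < T := by
    rw [hTeq, Sc_zero (n := n), hpow]
    have a1 := abs_le.mp hb1
    have a2 := abs_le.mp hb2
    have a3 := abs_le.mp hb3
    have a12 := abs_le.mp hb12
    have a13 := abs_le.mp hb13
    have a23 := abs_le.mp hb23
    have a123 := abs_le.mp hb123
    nlinarith [hpn]
  have hex : ∃ x : V n,
      (1 + chi (Ff w1 x)) * (1 + chi (Ff w2 x)) * (1 - chi (Ff w3 x)) ≠ 0 := by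
    by_contra hcon
    push_neg at hcon
    rw [hT, Finset.sum_eq_zero (fun x _ => hcon x)] at hTpos
    exact lt_irrefl 0 hTpos
  obtain ⟨x, hx⟩ := hex
  refine ⟨x, ?_, ?_, ?_⟩
  · rcases z2_cases (Ff w1 x) with h | h
    · exact h
    · exfalso; apply hx; rw [h]; show (1 + chi 1) * _ * _ = 0; norm_num [chi]
  · rcases z2_cases (Ff w2 x) with h | h
    · exact h
    · exfalso; apply hx; rw [h]; show _ * (1 + chi 1) * _ = 0; norm_num [chi]
  · rcases z2_cases (Ff w3 x) with h | h
    · exfalso; apply hx; rw [h]; show _ * _ * (1 - chi 0) = 0; norm_num [chi]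
    · exact h


lemma set_eq_of_fH {n : ℕ} {A B : Set (V n)} (hA : A ⊆ P n) (hB : B ⊆ P n)
    (h : ∀ x, fH A x = fH B x) : A = B := by
  ext x
  rw [mem_iff_fH hA, mem_iff_fH hB, h x]


theorem stmt11 (n : ℕ) (hn : 3 ≤ n) (A B C : Set (V n))
    (hA : IsHyperplane A) (hB : IsHyperplane B) (hC : IsHyperplane C)
    (hAB : A ≠ B) (hAC : A ≠ C) (hBC : B ≠ C)
    (h : A ∩ B ⊆ C) : C = boxAdd A B := by
  have hn1 : 1 ≤ n := le_trans (by norm_num) hn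
  obtain ⟨εA, pA, hfa⟩ := Wf_classify hn1 (hyperplane_Wf hA.1)
  obtain ⟨εB, pB, hfb⟩ := Wf_classify hn1 (hyperplane_Wf hB.1)
  obtain ⟨εC, pC, hfc⟩ := Wf_classify hn1 (hyperplane_Wf hC.1)
  set wA : ZMod 2 × V n := (εA, pA) with hwAdef
  set wB : ZMod 2 × V n := (εB, pB) with hwBdef
  set wC : ZMod 2 × V n := (εC, pC) with hwCdef
  have hfa' : ∀ x, fH A x = Ff wA x := fun x => hfa x
  have hfb' : ∀ x, fH B x = Ff wB x := fun x => hfb x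
  have hfc' : ∀ x, fH C x = Ff wC x := fun x => hfc x
  have hAP : A ⊆ P n := hA.1.1
  have hBP : B ⊆ P n := hB.1.1
  have hCP : C ⊆ P n := hC.1.1
  -- nonzero parameters
  have hne0 : ∀ (D : Set (V n)), D ⊆ P n → D ≠ P n → ∀ w : ZMod 2 × V n,
      (∀ x, fH D x = Ff w x) → w ≠ 0 := by
    intro D hDP hDne w hw hc
    obtain ⟨x, hxP, hxD⟩ := Set.exists_of_ssubset (hDP.ssubset_of_ne hDne)
    have hx0 : x ≠ 0 := hxP
    have h1 : fH D x = 1 := fH_of_not_mem hx0 hxD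
    rw [hw x, hc, Ff_zero_w] at h1
    exact absurd h1 (by decide)
  have hwA0 : wA ≠ 0 := hne0 A hAP hA.2 wA hfa'
  have hwB0 : wB ≠ 0 := hne0 B hBP hB.2 wB hfb'
  have hwC0 : wC ≠ 0 := hne0 C hCP hC.2 wC hfc'
  have hdist : ∀ (D E : Set (V n)), D ⊆ P n → E ⊆ P n → D ≠ E →
      ∀ w w' : ZMod 2 × V n, (∀ x, fH D x = Ff w x) → (∀ x, fH E x = Ff w' x) →
      w ≠ w' := by
    intro D E hDP hEP hDE w w' hw hw' hc
    exact hDE (set_eq_of_fH hDP hEP (fun x => by rw [hw x, hw' x, hc]))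
  have hwAB : wA ≠ wB := hdist A B hAP hBP hAB wA wB hfa' hfb'
  have hwCA : wC ≠ wA := hdist C A hCP hAP (Ne.symm hAC) wC wA hfc' hfa'
  have hwCB : wC ≠ wB := hdist C B hCP hBP (Ne.symm hBC) wC wB hfc' hfb'
  -- key: wC = wA + wB
  have hkey : wC = wA + wB := by
    by_contra hne
    obtain ⟨x, hx1, hx2, hx3⟩ := exists_point hn wA wB wC hwA0 hwB0 hwC0 hwAB hwCA hwCB hne
    have hx0 : x ≠ 0 := by
      intro hc; rw [hc, Ff_zero_x] at hx3; exact absurd hx3 (by decide)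
    have hxA : x ∈ A := (mem_iff_fH hAP x).mpr ⟨hx0, by rw [hfa' x]; exact hx1⟩
    have hxB : x ∈ B := (mem_iff_fH hBP x).mpr ⟨hx0, by rw [hfb' x]; exact hx2⟩
    have hxC : x ∈ C := h ⟨hxA, hxB⟩
    have := fH_of_mem hxC
    rw [hfc' x, hx3] at this
    exact absurd this (by decide)
  -- conclude
  ext x
  simp only [boxAdd, Set.mem_diff, Set.mem_symmDiff, P, Set.mem_setOf_eq]
  constructor
  · intro hxC
    obtain ⟨hx0, hfC⟩ := (mem_iff_fH hCP x).mp hxC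
    refine ⟨hx0, ?_⟩
    have hsum : fH A x + fH B x = 0 := by
      rw [hfa' x, hfb' x, ← Ff_add, ← hkey, ← hfc' x]
      exact hfC
    rintro (⟨ha, hb⟩ | ⟨hb, ha⟩)
    · rw [fH_of_mem ha, fH_of_not_mem hx0 hb] at hsum
      exact absurd hsum (by decide)
    · rw [fH_of_mem hb, fH_of_not_mem hx0 ha] at hsum
      exact absurd hsum (by decide)
  · rintro ⟨hx0, hnd⟩
    apply (mem_iff_fH hCP x).mpr
    refine ⟨hx0, ?_⟩
    rw [hfc' x, hkey, Ff_add, ← hfa' x, ← hfb' x]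
    by_cases ha : x ∈ A <;> by_cases hb : x ∈ B
    · rw [fH_of_mem ha, fH_of_mem hb]; decide
    · exact absurd (Or.inl ⟨ha, hb⟩) hnd
    · exact absurd (Or.inr ⟨hb, ha⟩) hnd
    · rw [fH_of_not_mem hx0 ha, fH_of_not_mem hx0 hb]; decide
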